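/- arXiv:1808.04995 — 5 statements merged into one kernel-verified Lean document; each statement's English description precedes it below -/
import Mathlib

section
/- Fix k ≥ 2 and n ≥ m ≥ 1. Let q : ({0,1}^n)^k → {0,1} be the indicator of the event that the XOR ⊕_{e=1}^k z_e restricted to its first m bits is either 0^m or 1^m. Then the Fourier coefficient q̂(S) equals 2^{1−m} if S = (s0^{n−m}, …, s0^{n−m}) for some s ∈ {0,1}^m of even Hamming weight (the same s repeated k times, padded with zeros), and q̂(S) = 0 for all other S ∈ ({0,1}^n)^k. -/
/-! With `x` the first `m` bits of `⊕ₑ zₑ`, `q = [x = 0] + [x = 1]` (the two events are disjoint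
as `m ≥ 1`), and expanding both indicators in characters of `{0,1}^m` gives
`q = 2^{-m} ∑ₜ (1 + (-1)^{|t|}) χₜ(x)`. Since `χₜ(x) = ∏ₑ χₜ(zₑ^{1:m})`, the character `χₜ(x)` is the
character of `Z` at the repeated, zero-padded pattern `padRep t`, so this is already the Fourier
expansion of `q`, and orthogonality of characters reads off the coefficients. -/

open Finset

/-- Boolean Fourier transform on `({0,1}^n)^k`, identified with `{0,1}^{kn}`. -/
noncomputable def fourP {k n : ℕ} (f : (Fin k → Fin n → Bool) → ℝ)
    (s : Fin k → Fin n → Bool) : ℝ :=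
  ((2 : ℝ) ^ (k * n))⁻¹ *
    ∑ z : Fin k → Fin n → Bool,
      f z * (-1 : ℝ) ^
        (univ.filter fun p : Fin k × Fin n => s p.1 p.2 = true ∧ z p.1 p.2 = true).card

/-- Bit `j < m` of the XOR `⊕_e z_e`. -/
def xorBit {k n m : ℕ} (hmn : m ≤ n) (Z : Fin k → Fin n → Bool) (j : Fin m) : Prop :=
  (univ.filter fun e : Fin k => Z e (Fin.castLE hmn j) = true).card % 2 = 1

instance {k n m : ℕ} (hmn : m ≤ n) (Z : Fin k → Fin n → Bool) (j : Fin m) :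
    Decidable (xorBit hmn Z j) := by unfold xorBit; infer_instance

/-- Indicator that the first `m` bits of `⊕_e z_e` are all `0` or all `1`. -/
def qInd {k n m : ℕ} (hmn : m ≤ n) (Z : Fin k → Fin n → Bool) : ℝ :=
  if (∀ j : Fin m, xorBit hmn Z j) ∨ (∀ j : Fin m, ¬ xorBit hmn Z j) then 1 else 0

/-- The `k`-fold repetition of `s ∈ {0,1}^m` padded with zeros to length `n`. -/
def padRep {k n m : ℕ} (s : Fin m → Bool) : Fin k → Fin n → Bool :=
  fun _ j => if h : (j : ℕ) < m then s ⟨j, h⟩ else false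

section Walsh

variable {α : Type*} [Fintype α]

noncomputable def walsh (S Z : α → Bool) : ℝ :=
  ∏ a, if S a && Z a then -1 else 1

lemma walsh_comm (S Z : α → Bool) : walsh S Z = walsh Z S := by
  simp only [walsh, Bool.and_comm]

lemma walsh_eq_neg_one_pow (S Z : α → Bool) :
    walsh S Z = (-1) ^ #{a | S a = true ∧ Z a = true} := by
  simp only [walsh, Bool.and_eq_true]
  rw [prod_ite, prod_const, prod_const, one_pow, mul_one]

lemma walsh_mul_walsh (S T Z : α → Bool) :
    walsh S Z * walsh T Z = walsh (fun a => xor (S a) (T a)) Z := by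
  rw [walsh, walsh, walsh, ← prod_mul_distrib]
  refine prod_congr rfl fun a _ => ?_
  cases S a <;> cases T a <;> cases Z a <;> norm_num

lemma walsh_const_true_left (Z : α → Bool) :
    walsh (fun _ => true) Z = if #{a | Z a = true} % 2 = 1 then -1 else 1 := by
  rw [walsh_eq_neg_one_pow, neg_one_pow_eq_pow_mod_two]
  simp only [true_and]
  rcases Nat.mod_two_eq_zero_or_one #{a | Z a = true} with h | h <;> simp [h]

variable [DecidableEq α]

lemma sum_walsh (S : α → Bool) :
    ∑ Z, walsh S Z = if ∀ a, S a = false then 2 ^ Fintype.card α else 0 := by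
  have hfactor : ∀ a, ∑ b, (if S a && b then (-1 : ℝ) else 1) = if S a = false then 2 else 0 :=
    fun a => by cases S a <;> norm_num
  simp only [walsh]
  rw [← Fintype.prod_sum (fun a b => if S a && b then (-1 : ℝ) else 1)]
  simp only [hfactor, prod_ite_zero, prod_const, mem_univ, true_implies, card_univ]

lemma sum_walsh_mul_walsh (S T : α → Bool) :
    ∑ Z, walsh S Z * walsh T Z = if S = T then 2 ^ Fintype.card α else 0 := by
  simp only [walsh_mul_walsh, sum_walsh, bne_eq_false_iff_eq, funext_iff]

lemma ite_eq_sum_walsh (c x : α → Bool) :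
    (if c = x then (1 : ℝ) else 0) = (2 ^ Fintype.card α)⁻¹ * ∑ t, walsh t c * walsh t x := by
  simp only [walsh_comm _ c, walsh_comm _ x, sum_walsh_mul_walsh]
  split_ifs <;> simp

noncomputable def walshCoeff (f : (α → Bool) → ℝ) (S : α → Bool) : ℝ :=
  (2 ^ Fintype.card α)⁻¹ * ∑ Z, f Z * walsh S Z

lemma walshCoeff_sum_mul_walsh {ι : Type*} (s : Finset ι) (c : ι → ℝ)
    (g : ι → α → Bool) (S : α → Bool) :
    walshCoeff (fun Z => ∑ i ∈ s, c i * walsh (g i) Z) S = ∑ i ∈ s, if g i = S then c i else 0 := by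
  rw [walshCoeff]
  simp only [sum_mul, mul_assoc]
  rw [sum_comm, mul_sum]
  refine sum_congr rfl fun i _ => ?_
  rw [← mul_sum, sum_walsh_mul_walsh]
  split_ifs <;> simp [mul_left_comm]

end Walsh

lemma fourP_eq_walshCoeff {k n : ℕ} (f : (Fin k → Fin n → Bool) → ℝ) (S : Fin k → Fin n → Bool) :
    fourP f S = walshCoeff (fun W => f (Function.curry W)) (Function.uncurry S) := by
  rw [fourP, walshCoeff, ← (Equiv.curry _ _ _).sum_comp]
  simp only [Fintype.card_prod, Fintype.card_fin, walsh_eq_neg_one_pow]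
  rfl

def xorPrefix {k n m : ℕ} (hmn : m ≤ n) (Z : Fin k → Fin n → Bool) : Fin m → Bool :=
  fun j => decide (xorBit hmn Z j)

lemma padRep_injective {k n m : ℕ} (hk : 0 < k) (hmn : m ≤ n) :
    Function.Injective (padRep (k := k) (n := n) : (Fin m → Bool) → _) := fun s t h => by
  funext j
  simpa [padRep] using congrFun (congrFun h ⟨0, hk⟩) (Fin.castLE hmn j)

section Parity

variable {k n m : ℕ} (hmn : m ≤ n)

lemma walsh_uncurry_padRep (t : Fin m → Bool) (W : Fin k × Fin n → Bool) :
    walsh (Function.uncurry (padRep t)) W = walsh t (xorPrefix hmn (Function.curry W)) := by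
  rw [walsh, Fintype.prod_prod_type, prod_comm, walsh]
  symm
  refine Fintype.prod_of_injective (Fin.castLE hmn) (Fin.castLE_injective hmn) _ _ ?_ ?_
  · rintro i hi
    have : ¬ (i : ℕ) < m := fun h => hi ⟨⟨i, h⟩, rfl⟩
    simp [padRep, this]
  · intro j
    have hpad : ∀ e, padRep (k := k) t e (Fin.castLE hmn j) = t j := fun e => dif_pos j.isLt
    cases htj : t j
    · simp [hpad, htj]
    · simp only [Function.uncurry_apply_pair, hpad, htj, Bool.true_and]
      convert (walsh_const_true_left (fun e : Fin k => W (e, Fin.castLE hmn j))).symm using 2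
      · exact decide_eq_true_iff
      · rfl

lemma qInd_eq_ite_add_ite (hm : 1 ≤ m) (Z : Fin k → Fin n → Bool) :
    qInd hmn Z = (if (fun _ => false) = xorPrefix hmn Z then 1 else 0) +
      (if (fun _ => true) = xorPrefix hmn Z then 1 else 0) := by
  have hexcl : ¬ ((∀ j, xorBit hmn Z j) ∧ ∀ j, ¬ xorBit hmn Z j) :=
    fun h => h.2 ⟨0, hm⟩ (h.1 ⟨0, hm⟩)
  simp only [qInd, funext_iff, xorPrefix, eq_comm (a := false), eq_comm (a := true),
    decide_eq_true_iff, decide_eq_false_iff_not]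
  split_ifs <;> (try norm_num) <;> tauto

lemma qInd_curry_eq_sum (hm : 1 ≤ m) (W : Fin k × Fin n → Bool) :
    qInd hmn (Function.curry W) = ∑ t : Fin m → Bool,
      (2 ^ m)⁻¹ * (1 + (-1) ^ #{j | t j = true}) * walsh (Function.uncurry (padRep t)) W := by
  rw [qInd_eq_ite_add_ite hmn hm, ite_eq_sum_walsh, ite_eq_sum_walsh, ← mul_add, ← sum_add_distrib,
    mul_sum, Fintype.card_fin]
  refine sum_congr rfl fun t _ => ?_
  rw [walsh_uncurry_padRep hmn]
  simp only [walsh_eq_neg_one_pow t, Bool.false_eq_true, and_false, and_true, filter_false,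
    card_empty, pow_zero]
  ring

lemma fourP_qInd (hm : 1 ≤ m) (S : Fin k → Fin n → Bool) :
    fourP (qInd hmn) S =
      ∑ t : Fin m → Bool, if padRep t = S then (2 ^ m)⁻¹ * (1 + (-1) ^ #{j | t j = true}) else 0 := by
  simp only [fourP_eq_walshCoeff, qInd_curry_eq_sum hmn hm, walshCoeff_sum_mul_walsh,
    Function.uncurry_injective.eq_iff]

end Parity

/-- Fourier coefficients of the parity-promise indicator `q`:
`q̂(S) = 2^{1−m}` when `S = (s0^{n−m})_e` with `|s|` even, and `q̂(S) = 0` otherwise. -/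
theorem stmt5 (k n m : ℕ) (hk : 2 ≤ k) (hm : 1 ≤ m) (hmn : m ≤ n) :
    (∀ s : Fin m → Bool, Even (univ.filter fun j => s j = true).card →
      fourP (qInd (k := k) hmn) (padRep s) = 2 * ((2 : ℝ) ^ m)⁻¹) ∧
    (∀ S : Fin k → Fin n → Bool,
      (¬ ∃ s : Fin m → Bool, Even (univ.filter fun j => s j = true).card ∧ S = padRep s) →
      fourP (qInd (k := k) hmn) S = 0) := by
  refine ⟨fun s hs => ?_, fun S hS => ?_⟩
  · have hinj := padRep_injective (k := k) (by omega) hmn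
    rw [fourP_qInd hmn hm, sum_eq_single_of_mem s (mem_univ s)
      fun t _ hts => if_neg fun h => hts (hinj h), if_pos rfl, hs.neg_one_pow]
    ring
  · rw [fourP_qInd hmn hm]
    refine sum_eq_zero fun t _ => ?_
    split_ifs with hpad
    · have hodd : Odd #{j | t j = true} := Nat.not_even_iff_odd.1 fun he => hS ⟨t, he, hpad.symm⟩
      rw [hodd.neg_one_pow]
      ring
    · rfl
end

section
/- Every finite graph G = (V,E) admits a half-integral optimal fractional vertex cover: there exists x : V → {0, 1/2, 1} with x(u) + x(v) ≥ 1 for every edge uv, such that ∑_v x(v) equals the fractional vertex cover number τ(G) (the minimum of ∑_v f(v) over all f : V → [0,∞) with f(u) + f(v) ≥ 1 for all edges uv). -/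
/-!
Threshold rounding: for a fractional cover `f` and `θ ∈ (0, 1/2]`, round `f v` to `0` if
`f v < θ`, to `1` if `f v ≥ 1 - θ`, and to `1/2` otherwise. An edge with `f u < θ` has
`f v > 1 - θ`, so every rounding is again a cover. Averaged over `θ`, vertex `v` receives
`min (f v) 1 ≤ f v`, so some rounding weighs at most `∑ f`. Hence the LP infimum is attained
on the finitely many half-integral covers.
-/

open Finset MeasureTheory Set

noncomputable def thresholdRound (θ a : ℝ) : ℝ :=
  (Iic a).indicator (fun _ => 1 / 2) θ + (Ici (1 - a)).indicator (fun _ => 1 / 2) θ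

lemma thresholdRound_eq_zero_or_half_or_one (θ a : ℝ) :
    thresholdRound θ a = 0 ∨ thresholdRound θ a = 1 / 2 ∨ thresholdRound θ a = 1 := by
  unfold thresholdRound
  simp only [indicator_apply]
  split_ifs <;> norm_num

lemma one_le_thresholdRound_add {θ a b : ℝ} (hθ : θ ≤ 1 / 2) (hab : 1 ≤ a + b) :
    1 ≤ thresholdRound θ a + thresholdRound θ b := by
  unfold thresholdRound
  simp only [indicator_apply, Set.mem_Iic, Set.mem_Ici]
  split_ifs <;> norm_num <;> linarith

lemma integrableOn_indicator_const_Ioc {s : Set ℝ} (hs : MeasurableSet s) (c a b : ℝ) :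
    IntegrableOn (s.indicator fun _ => c) (Ioc a b) :=
  (integrableOn_const measure_Ioc_lt_top.ne).indicator hs

lemma integrableOn_thresholdRound (a : ℝ) :
    IntegrableOn (fun θ => thresholdRound θ a) (Ioc 0 (1 / 2)) :=
  (integrableOn_indicator_const_Ioc measurableSet_Iic _ _ _).add
    (integrableOn_indicator_const_Ioc measurableSet_Ici _ _ _)

lemma setIntegral_thresholdRound_le {a : ℝ} (ha : 0 ≤ a) :
    ∫ θ in Ioc 0 (1 / 2), thresholdRound θ a ≤ a / 2 := by
  have hlow : volume.real (Ioc (0 : ℝ) (1 / 2) ∩ Iic a) = min (1 / 2) a := by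
    rw [Ioc_inter_Iic, Real.volume_real_Ioc, sub_zero, max_eq_left (le_min (by norm_num) ha)]
  have hhigh : volume.real (Ioc (0 : ℝ) (1 / 2) ∩ Ici (1 - a)) ≤ max (a - 1 / 2) 0 := by
    calc _ ≤ volume.real (Icc (1 - a) (1 / 2)) :=
          measureReal_mono (fun θ hθ => ⟨hθ.2, hθ.1.2⟩) measure_Icc_lt_top.ne
      _ = _ := by rw [Real.volume_real_Icc]; ring_nf
  unfold thresholdRound
  rw [integral_add (integrableOn_indicator_const_Ioc measurableSet_Iic _ _ _)
      (integrableOn_indicator_const_Ioc measurableSet_Ici _ _ _),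
    setIntegral_indicator measurableSet_Iic, setIntegral_indicator measurableSet_Ici,
    setIntegral_const, setIntegral_const, hlow, smul_eq_mul, smul_eq_mul]
  rcases le_total a (1 / 2) with h | h
  · rw [min_eq_right h]
    rw [max_eq_right (by linarith)] at hhigh
    nlinarith
  · rw [min_eq_left h]
    rw [max_eq_left (by linarith)] at hhigh
    nlinarith

lemma exists_sum_thresholdRound_le {ι : Type*} (s : Finset ι) {f : ι → ℝ}
    (hf : ∀ i ∈ s, 0 ≤ f i) :
    ∃ θ ∈ Ioc (0 : ℝ) (1 / 2), ∑ i ∈ s, thresholdRound θ (f i) ≤ ∑ i ∈ s, f i := by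
  have hint : ∀ i ∈ s, IntegrableOn (fun θ => thresholdRound θ (f i)) (Ioc 0 (1 / 2)) :=
    fun i _ => integrableOn_thresholdRound (f i)
  obtain ⟨θ, hθ, hle⟩ :=
    exists_le_setAverage (by simp) measure_Ioc_lt_top.ne (integrable_finsetSum s hint)
  refine ⟨θ, hθ, hle.trans ?_⟩
  rw [setAverage_eq, Real.volume_real_Ioc_of_le (by norm_num), integral_finsetSum s hint,
    smul_eq_mul, Finset.mul_sum, show ((1 : ℝ) / 2 - 0)⁻¹ = 2 by norm_num]
  exact Finset.sum_le_sum fun i hi => by linarith [setIntegral_thresholdRound_le (hf i hi)]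

theorem SimpleGraph.exists_halfIntegral_cover_le {V : Type*} [Fintype V] (G : SimpleGraph V)
    {f : V → ℝ} (hf : ∀ v, 0 ≤ f v) (hcov : ∀ u v, G.Adj u v → 1 ≤ f u + f v) :
    ∃ x : V → ℝ, (∀ v, x v = 0 ∨ x v = 1 / 2 ∨ x v = 1) ∧
      (∀ u v, G.Adj u v → 1 ≤ x u + x v) ∧ ∑ v, x v ≤ ∑ v, f v := by
  obtain ⟨θ, hθ, hle⟩ := exists_sum_thresholdRound_le Finset.univ fun v _ => hf v
  exact ⟨fun v => thresholdRound θ (f v), fun v => thresholdRound_eq_zero_or_half_or_one θ (f v),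
    fun u v huv => one_le_thresholdRound_add hθ.2 (hcov u v huv), hle⟩

lemma finite_setOf_halfIntegral (ι : Type*) [Finite ι] :
    {x : ι → ℝ | ∀ i, x i = 0 ∨ x i = 1 / 2 ∨ x i = 1}.Finite := by
  convert Set.Finite.pi (t := fun _ : ι => ({0, 1 / 2, 1} : Set ℝ)) fun _ => by simp using 1
  ext x
  simp

theorem stmt12_general (V : Type*) [Fintype V] (G : SimpleGraph V) :
    ∃ x : V → ℝ,
      (∀ v, x v = 0 ∨ x v = 1 / 2 ∨ x v = 1) ∧
      (∀ u v, G.Adj u v → 1 ≤ x u + x v) ∧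
      ∑ v, x v =
        sInf {r : ℝ | ∃ f : V → ℝ, (∀ v, 0 ≤ f v) ∧
          (∀ u v, G.Adj u v → 1 ≤ f u + f v) ∧ r = ∑ v, f v} := by
  let H : Set (V → ℝ) :=
    {x | (∀ v, x v = 0 ∨ x v = 1 / 2 ∨ x v = 1) ∧ ∀ u v, G.Adj u v → 1 ≤ x u + x v}
  have hH : H.Finite := (finite_setOf_halfIntegral V).subset fun _ hx => hx.1
  obtain ⟨x, ⟨hx_half, hx_cov⟩, hx_min⟩ := H.exists_min_image (fun x => ∑ v, x v) hH
    ⟨fun _ => 1, fun _ => Or.inr (Or.inr rfl), fun _ _ _ => by norm_num⟩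
  refine ⟨x, hx_half, hx_cov, (IsLeast.csInf_eq ⟨?_, ?_⟩).symm⟩
  · refine ⟨x, fun v => ?_, hx_cov, rfl⟩
    rcases hx_half v with h | h | h <;> rw [h] <;> norm_num
  · rintro r ⟨f, hf, hf_cov, rfl⟩
    obtain ⟨y, hy_half, hy_cov, hy_le⟩ := G.exists_halfIntegral_cover_le hf hf_cov
    exact (hx_min y ⟨hy_half, hy_cov⟩).trans hy_le

/-- Every finite graph admits a half-integral optimal fractional vertex cover:
some `x : V → {0, 1/2, 1}` covering every edge, whose total weight equals the
fractional vertex cover number (the infimum of the vertex cover LP). -/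
theorem stmt12 (V : Type*) [Fintype V] [DecidableEq V] (G : SimpleGraph V) :
    ∃ x : V → ℝ,
      (∀ v, x v = 0 ∨ x v = 1 / 2 ∨ x v = 1) ∧
      (∀ u v, G.Adj u v → 1 ≤ x u + x v) ∧
      ∑ v, x v =
        sInf {r : ℝ | ∃ f : V → ℝ, (∀ v, 0 ≤ f v) ∧
          (∀ u v, G.Adj u v → 1 ≤ f u + f v) ∧ r = ∑ v, f v} :=
  stmt12_general V G
end

section
/- Let G = (V,E) be a connected graph with |E| > 1. Then max(MVC_{1/2}(G), max_{e∈E} MVC_1(G∖e)) = MVC_1(G), where MVC_1(G) is the standard fractional vertex cover number of G and G∖e denotes G with edge e deleted (vertices retained). In particular, either G is an odd cycle (in which case MVC_{1/2}(G) = MVC_1(G) = |E|/2), or there exists an edge e with MVC_1(G∖e) = MVC_1(G). -/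
open Finset

/-- The λ-modified fractional vertex cover number of a graph given by its edge set
`Ed ⊆ Sym2 V`: mass may be placed on vertices, and on edges at price `λ`. -/
noncomputable def MVC (V : Type*) [Fintype V] [DecidableEq V] (lam : ℝ)
    (Ed : Finset (Sym2 V)) : ℝ :=
  sInf {r : ℝ | ∃ fV : V → ℝ, ∃ fE : Sym2 V → ℝ,
    (∀ v, 0 ≤ fV v) ∧ (∀ e, 0 ≤ fE e) ∧
    (∀ u v, s(u, v) ∈ Ed → 1 ≤ fV u + fV v + fE s(u, v)) ∧
    r = ∑ v, fV v + lam * ∑ e ∈ Ed, fE e}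

/-!
The program defining `MVC V λ E` is a linear program whose dual asks for a fractional matching
`y` with `y e ≤ λ` on every edge. König's theorem on the bipartite double cover of `G` gives a
half-integral optimal fractional matching `y` and an optimal fractional cover `f`.

If no edge deletion preserves `MVC_1`, every optimal fractional matching has full support (an
edge of weight zero could be deleted). So `y ≥ 1/2`, and since every edge meets another edge,
`y ≡ 1/2`; this `y` is also dual feasible for `λ = 1/2`, whence `MVC_{1/2} = MVC_1 = |E|/2`.
`G` is not bipartite, for König would then give an integral optimal matching, again of full
support, so the edges would be pairwise disjoint. By complementary slackness every edge is
tight for `f`, so `f ≡ 1/2` (otherwise `{f < 1/2}`, `{f > 1/2}` is a bipartition); thus every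
vertex is saturated by `y ≡ 1/2` and `G` is 2-regular. A connected 2-regular graph that is not
bipartite is an odd cycle.
-/

open SimpleGraph

section FractionalMatching

variable {V : Type*} [DecidableEq V] {Ed Ed' : Finset (Sym2 V)} {y : Sym2 V → ℝ}
  {M : Finset (V × V)}

def weightedDegree (Ed : Finset (Sym2 V)) (y : Sym2 V → ℝ) (v : V) : ℝ :=
  ∑ e ∈ Ed with v ∈ e, y e

structure IsFractionalMatching (Ed : Finset (Sym2 V)) (y : Sym2 V → ℝ) : Prop where
  nonneg : ∀ e ∈ Ed, 0 ≤ y e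
  weightedDegree_le_one : ∀ v, weightedDegree Ed y v ≤ 1

structure IsFractionalCover (Ed : Finset (Sym2 V)) (f : V → ℝ) : Prop where
  nonneg : ∀ v, 0 ≤ f v
  one_le_add : ∀ u v, s(u, v) ∈ Ed → 1 ≤ f u + f v

lemma IsFractionalMatching.add_le_weightedDegree (hy : IsFractionalMatching Ed y) {e e' : Sym2 V}
    (he : e ∈ Ed) (he' : e' ∈ Ed) (hne : e ≠ e') {v : V} (hv : v ∈ e) (hv' : v ∈ e') :
    y e + y e' ≤ weightedDegree Ed y v := by
  rw [← sum_pair hne]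
  exact sum_le_sum_of_subset_of_nonneg (insert_subset_iff.2 ⟨mem_filter.2 ⟨he, hv⟩,
    singleton_subset_iff.2 (mem_filter.2 ⟨he', hv'⟩)⟩)
    fun e he _ => hy.nonneg e (mem_filter.1 he).1

lemma IsFractionalMatching.le_one (hy : IsFractionalMatching Ed y) {e : Sym2 V} (he : e ∈ Ed) :
    y e ≤ 1 :=
  (single_le_sum (fun e he => hy.nonneg e (mem_filter.1 he).1)
    (mem_filter.2 ⟨he, Sym2.out_fst_mem e⟩)).trans (hy.weightedDegree_le_one e.out.1)

lemma IsFractionalMatching.mono (hy : IsFractionalMatching Ed y) (h : Ed' ⊆ Ed) :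
    IsFractionalMatching Ed' y :=
  ⟨fun e he => hy.nonneg e (h he), fun v => (sum_le_sum_of_subset_of_nonneg
    (filter_subset_filter _ h) fun e he _ => hy.nonneg e (mem_filter.1 he).1).trans
      (hy.weightedDegree_le_one v)⟩

def edgeCount (M : Finset (V × V)) (e : Sym2 V) : ℝ := #{p ∈ M | s(p.1, p.2) = e}

lemma sum_edgeCount (hM : ∀ p ∈ M, s(p.1, p.2) ∈ Ed) : ∑ e ∈ Ed, edgeCount M e = #M := by
  rw [card_eq_sum_card_fiberwise hM]
  push_cast
  rfl

lemma weightedDegree_edgeCount (hM : ∀ p ∈ M, s(p.1, p.2) ∈ Ed) (v : V) :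
    weightedDegree Ed (edgeCount M) v = #{p ∈ M | v ∈ s(p.1, p.2)} := by
  rw [card_eq_sum_card_fiberwise (f := fun p : V × V => s(p.1, p.2)) (t := {e ∈ Ed | v ∈ e})
    fun p hp => mem_filter.2 ⟨hM p (mem_filter.1 hp).1, (mem_filter.1 hp).2⟩]
  push_cast
  refine sum_congr rfl fun e he => ?_
  rw [edgeCount, filter_filter]
  congr 2
  exact filter_congr fun p _ => ⟨fun h => ⟨h ▸ (mem_filter.1 he).2, h⟩, And.right⟩

lemma Set.InjOn.card_filter_eq_le_one {α β : Type*} [DecidableEq β] {s : Finset α}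
    {f : α → β} (hf : Set.InjOn f s) (b : β) : #{a ∈ s | f a = b} ≤ 1 :=
  card_le_one.2 fun a ha b hb => by
    simp only [mem_filter] at ha hb
    exact hf ha.1 hb.1 (ha.2.trans hb.2.symm)

lemma card_filter_mem_mk_le_two (h1 : Set.InjOn Prod.fst (M : Set (V × V)))
    (h2 : Set.InjOn Prod.snd (M : Set (V × V))) (v : V) : #{p ∈ M | v ∈ s(p.1, p.2)} ≤ 2 :=
  calc #{p ∈ M | v ∈ s(p.1, p.2)} ≤ #({p ∈ M | p.1 = v} ∪ {p ∈ M | p.2 = v}) := by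
        refine card_le_card fun p hp => ?_
        simp only [mem_filter, mem_union, Sym2.mem_iff] at hp ⊢
        grind
    _ ≤ 1 + 1 := (card_union_le _ _).trans
        (add_le_add (h1.card_filter_eq_le_one v) (h2.card_filter_eq_le_one v))

lemma card_filter_mem_mk_le_one {s t : Set V} (hst : Disjoint s t)
    (hM : ∀ p ∈ M, p.1 ∈ s ∧ p.2 ∈ t) (h1 : Set.InjOn Prod.fst (M : Set (V × V)))
    (h2 : Set.InjOn Prod.snd (M : Set (V × V))) (v : V) : #{p ∈ M | v ∈ s(p.1, p.2)} ≤ 1 := by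
  by_cases hv : v ∈ s
  · refine (card_le_card fun p hp => ?_).trans (h1.card_filter_eq_le_one v)
    simp only [mem_filter, Sym2.mem_iff] at hp ⊢
    exact ⟨hp.1, hp.2.elim Eq.symm
      fun h => absurd (h ▸ (hM p hp.1).2) (Set.disjoint_left.1 hst hv)⟩
  · refine (card_le_card fun p hp => ?_).trans (h2.card_filter_eq_le_one v)
    simp only [mem_filter, Sym2.mem_iff] at hp ⊢
    exact ⟨hp.1, hp.2.elim (fun h => absurd (h ▸ (hM p hp.1).1) hv) Eq.symm⟩

lemma exists_matching_of_injective {R : Finset (V × V)} {CL CR : Finset V} {F : CL → V}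
    {F' : CR → V} (hF : Function.Injective F) (hF' : Function.Injective F')
    (hFR : ∀ x : CL, ((x : V), F x) ∈ R ∧ F x ∉ CR)
    (hF'R : ∀ y : CR, (F' y, (y : V)) ∈ R ∧ F' y ∉ CL) :
    ∃ M ⊆ R, Set.InjOn Prod.fst (M : Set (V × V)) ∧ Set.InjOn Prod.snd (M : Set (V × V)) ∧
      #CL + #CR ≤ #M := by
  set φ : CL ⊕ CR → V × V := Sum.elim (fun x => (x, F x)) (fun y => (F' y, y))
  have hfst : Function.Injective (Prod.fst ∘ φ) := by
    rw [Sum.comp_elim]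
    exact Subtype.val_injective.sumElim hF'
      fun x y h => (hF'R y).2 ((show (x : V) = F' y from h) ▸ x.2)
  have hsnd : Function.Injective (Prod.snd ∘ φ) := by
    rw [Sum.comp_elim]
    exact hF.sumElim Subtype.val_injective
      fun x y h => (hFR x).2 ((show F x = y from h) ▸ y.2)
  refine ⟨univ.image φ, ?_, ?_, ?_, ?_⟩
  · rintro _ hp
    obtain ⟨x | y, -, rfl⟩ := mem_image.1 hp
    exacts [(hFR x).1, (hF'R y).1]
  · rw [coe_image]
    exact hfst.injOn.image_of_comp
  · rw [coe_image]
    exact hsnd.injOn.image_of_comp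
  · rw [card_image_of_injective _ hfst.of_comp, card_univ, Fintype.card_sum,
      Fintype.card_coe, Fintype.card_coe]

end FractionalMatching

section Konig

variable {V : Type*} [Fintype V] [DecidableEq V]

lemma exists_injective_of_minimal_cover {R : Finset (V × V)} {CL CR : Finset V}
    (hcov : ∀ p ∈ R, p.1 ∈ CL ∨ p.2 ∈ CR)
    (hmin : ∀ CL' CR' : Finset V, (∀ p ∈ R, p.1 ∈ CL' ∨ p.2 ∈ CR') → #CL + #CR ≤ #CL' + #CR') :
    ∃ F : CL → V, Function.Injective F ∧ ∀ x : CL, ((x : V), F x) ∈ R ∧ F x ∉ CR := by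
  set N : CL → Finset V := fun x => {w | ((x : V), w) ∈ R ∧ w ∉ CR}
  suffices hall : ∀ A : Finset CL, #A ≤ #(A.biUnion N) by
    obtain ⟨F, hF, hFN⟩ := (all_card_le_biUnion_card_iff_exists_injective N).1 hall
    exact ⟨F, hF, fun x => by simpa [N] using hFN x⟩
  intro A
  by_contra! hA
  set A' : Finset V := A.map (Function.Embedding.subtype _)
  have hA' : A' ⊆ CL := fun _ hx => by
    obtain ⟨x, -, rfl⟩ := mem_map.1 hx
    exact x.2
  -- trading `A` for its neighbours outside `CR` would give a smaller cover
  have hcov' : ∀ p ∈ R, p.1 ∈ CL \ A' ∨ p.2 ∈ CR ∪ A.biUnion N := by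
    intro p hp
    by_cases h1 : p.1 ∈ A'
    · obtain ⟨x, hx, hpx⟩ := mem_map.1 h1
      by_cases h2 : p.2 ∈ CR
      · exact Or.inr (mem_union_left _ h2)
      · refine Or.inr (mem_union_right _ (mem_biUnion.2 ⟨x, hx, ?_⟩))
        simp only [N, mem_filter, mem_univ, true_and]
        exact ⟨by rwa [show ((x : V), p.2) = p from Prod.ext hpx rfl], h2⟩
    · rcases hcov p hp with h | h
      · exact Or.inl (mem_sdiff.2 ⟨h, h1⟩)
      · exact Or.inr (mem_union_left _ h)
  have := hmin _ _ hcov'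
  have := card_union_le CR (A.biUnion N)
  have := card_sdiff_of_subset hA'
  have := card_le_card hA'
  simp only [A', card_map] at *
  omega

/-- König's theorem, for the bipartite graph between two copies of `V` given by `R`. -/
theorem exists_matching_card_ge_cover (R : Finset (V × V)) :
    ∃ M ⊆ R, Set.InjOn Prod.fst (M : Set (V × V)) ∧ Set.InjOn Prod.snd (M : Set (V × V)) ∧
      ∃ CL CR : Finset V, (∀ p ∈ R, p.1 ∈ CL ∨ p.2 ∈ CR) ∧ #CL + #CR ≤ #M := by
  obtain ⟨⟨CL, CR⟩, hC, hmin⟩ := exists_min_image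
    ((univ ×ˢ univ : Finset (Finset V × Finset V)).filter
      fun C => ∀ p ∈ R, p.1 ∈ C.1 ∨ p.2 ∈ C.2)
    (fun C => #C.1 + #C.2) ⟨(univ, ∅), by simp⟩
  have hcov : ∀ p ∈ R, p.1 ∈ CL ∨ p.2 ∈ CR := (mem_filter.1 hC).2
  obtain ⟨F, hF, hFR⟩ := exists_injective_of_minimal_cover hcov
    fun CL' CR' h => hmin (CL', CR') (by simpa using h)
  obtain ⟨F', hF', hF'R⟩ := exists_injective_of_minimal_cover (R := R.image Prod.swap)
    (CL := CR) (CR := CL)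
    (fun p hp => by obtain ⟨q, hq, rfl⟩ := mem_image.1 hp; exact (hcov q hq).symm)
    fun CL' CR' h => by
      have := hmin (CR', CL')
        (by simpa using fun (p : V × V) hp => (h p.swap (mem_image_of_mem _ hp)).symm)
      simp only at this
      omega
  obtain ⟨M, hMR, h1, h2, hcard⟩ := exists_matching_of_injective hF hF' hFR
    fun y => ⟨by simpa using (hF'R y).1, (hF'R y).2⟩
  exact ⟨M, hMR, h1, h2, CL, CR, hcov, hcard⟩

end Konig

section Duality

variable {V : Type*} [Fintype V] [DecidableEq V] {lam : ℝ} {Ed : Finset (Sym2 V)}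
  {y : Sym2 V → ℝ} {f : V → ℝ}

lemma MVC_le_objective (hlam : 0 ≤ lam) {fV : V → ℝ} {fE : Sym2 V → ℝ}
    (hfV : ∀ v, 0 ≤ fV v) (hfE : ∀ e, 0 ≤ fE e)
    (hc : ∀ u v, s(u, v) ∈ Ed → 1 ≤ fV u + fV v + fE s(u, v)) :
    MVC V lam Ed ≤ ∑ v, fV v + lam * ∑ e ∈ Ed, fE e := by
  refine csInf_le ⟨0, ?_⟩ ⟨fV, fE, hfV, hfE, hc, rfl⟩
  rintro r ⟨fV, fE, hfV, hfE, -, rfl⟩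
  have := sum_nonneg fun v (_ : v ∈ univ) => hfV v
  have := sum_nonneg fun e (_ : e ∈ Ed) => hfE e
  positivity

lemma le_MVC {a : ℝ}
    (h : ∀ fV : V → ℝ, ∀ fE : Sym2 V → ℝ, (∀ v, 0 ≤ fV v) → (∀ e, 0 ≤ fE e) →
      (∀ u v, s(u, v) ∈ Ed → 1 ≤ fV u + fV v + fE s(u, v)) →
      a ≤ ∑ v, fV v + lam * ∑ e ∈ Ed, fE e) :
    a ≤ MVC V lam Ed := by
  refine le_csInf ⟨_, fun _ => 1, fun _ => 0, fun _ => zero_le_one, fun _ => le_rfl,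
    fun _ _ _ => by norm_num, rfl⟩ ?_
  rintro r ⟨fV, fE, hfV, hfE, hc, rfl⟩
  exact h fV fE hfV hfE hc

lemma IsFractionalCover.MVC_le (hlam : 0 ≤ lam) (hf : IsFractionalCover Ed f) :
    MVC V lam Ed ≤ ∑ v, f v := by
  simpa using MVC_le_objective (fE := 0) hlam hf.nonneg (fun _ => le_rfl)
    (by simpa using hf.one_le_add)

lemma MVC_mono (hlam : 0 ≤ lam) {Ed' : Finset (Sym2 V)} (h : Ed' ⊆ Ed) :
    MVC V lam Ed' ≤ MVC V lam Ed :=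
  le_MVC fun _ fE hfV hfE hc => (MVC_le_objective hlam hfV hfE fun u v huv => hc u v (h huv)).trans
    (by gcongr; exact fun e _ _ => hfE e)

lemma MVC_mono_lam {lam' : ℝ} (hlam : 0 ≤ lam) (h : lam ≤ lam') (Ed : Finset (Sym2 V)) :
    MVC V lam Ed ≤ MVC V lam' Ed :=
  le_MVC fun _ fE hfV hfE hc => (MVC_le_objective hlam hfV hfE hc).trans
    (by gcongr; exact sum_nonneg fun e _ => hfE e)

lemma sum_filter_mem_mk {u w : V} (h : u ≠ w) (f : V → ℝ) :
    ∑ v with v ∈ s(u, w), f v = f u + f w := by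
  rw [show ({v | v ∈ s(u, w)} : Finset V) = {u, w} by ext; simp, sum_pair h]

lemma sum_mul_sum_mem_eq_sum_mul_weightedDegree (Ed : Finset (Sym2 V)) (y : Sym2 V → ℝ)
    (f : V → ℝ) : ∑ e ∈ Ed, y e * ∑ v with v ∈ e, f v = ∑ v, f v * weightedDegree Ed y v := by
  simp only [weightedDegree, mul_sum]
  exact sum_comm' (by simp [and_comm]) |>.trans (sum_congr rfl fun _ _ => sum_congr rfl
    fun _ _ => mul_comm _ _)

lemma IsFractionalCover.one_le_sum_mem (hloop : ∀ e ∈ Ed, ¬ e.IsDiag) (hf : IsFractionalCover Ed f)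
    {e : Sym2 V} (he : e ∈ Ed) : 1 ≤ ∑ v with v ∈ e, f v := by
  induction e using Sym2.ind with
  | h u w => rw [sum_filter_mem_mk (by simpa using hloop _ he)]; exact hf.one_le_add u w he

lemma IsFractionalMatching.sum_le_MVC (hloop : ∀ e ∈ Ed, ¬ e.IsDiag)
    (hy : IsFractionalMatching Ed y) (hlam : ∀ e ∈ Ed, y e ≤ lam) :
    ∑ e ∈ Ed, y e ≤ MVC V lam Ed := by
  refine le_MVC fun fV fE hfV hfE hc => ?_
  have hcov : ∀ e ∈ Ed, 1 ≤ (∑ v with v ∈ e, fV v) + fE e := by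
    intro e he
    induction e using Sym2.ind with
    | h u w => rw [sum_filter_mem_mk (by simpa using hloop _ he)]; exact hc u w he
  calc ∑ e ∈ Ed, y e ≤ ∑ e ∈ Ed, y e * ((∑ v with v ∈ e, fV v) + fE e) :=
        sum_le_sum fun e he => le_mul_of_one_le_right (hy.nonneg e he) (hcov e he)
    _ = ∑ v, fV v * weightedDegree Ed y v + ∑ e ∈ Ed, y e * fE e := by
        simp only [mul_add, sum_add_distrib, sum_mul_sum_mem_eq_sum_mul_weightedDegree]
    _ ≤ ∑ v, fV v + lam * ∑ e ∈ Ed, fE e := by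
        rw [mul_sum]
        gcongr with v _ e he
        · exact mul_le_of_le_one_right (hfV v) (hy.weightedDegree_le_one v)
        exacts [hfE e, hlam e he]

lemma IsFractionalMatching.sum_le_MVC_one (hloop : ∀ e ∈ Ed, ¬ e.IsDiag)
    (hy : IsFractionalMatching Ed y) : ∑ e ∈ Ed, y e ≤ MVC V 1 Ed :=
  hy.sum_le_MVC hloop fun _ he => hy.le_one he

lemma IsFractionalMatching.complementary_slackness (hloop : ∀ e ∈ Ed, ¬ e.IsDiag)
    (hy : IsFractionalMatching Ed y) (hf : IsFractionalCover Ed f)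
    (hval : ∑ e ∈ Ed, y e = ∑ v, f v) :
    (∀ u w, s(u, w) ∈ Ed → 0 < y s(u, w) → f u + f w = 1) ∧
      ∀ v, 0 < f v → weightedDegree Ed y v = 1 := by
  have hE : ∀ e ∈ Ed, y e ≤ y e * ∑ v with v ∈ e, f v := fun e he =>
    le_mul_of_one_le_right (hy.nonneg e he) (hf.one_le_sum_mem hloop he)
  have hV : ∀ v ∈ univ, f v * weightedDegree Ed y v ≤ f v := fun v _ =>
    mul_le_of_le_one_right (hf.nonneg v) (hy.weightedDegree_le_one v)
  -- the chain `∑ y ≤ ∑ y e * (f u + f w) = ∑ f v * weightedDegree v ≤ ∑ f` is tight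
  have hmid := sum_mul_sum_mem_eq_sum_mul_weightedDegree Ed y f
  have hEeq := (sum_eq_sum_iff_of_le hE).1 (by linarith [sum_le_sum hE, sum_le_sum hV])
  have hVeq := (sum_eq_sum_iff_of_le hV).1 (by linarith [sum_le_sum hE, sum_le_sum hV])
  refine ⟨fun u w he hpos => ?_, fun v hpos => (mul_eq_left₀ hpos.ne').1 (hVeq v (mem_univ v))⟩
  have := hEeq _ he
  rw [sum_filter_mem_mk (by simpa using hloop _ he)] at this
  exact (mul_eq_left₀ hpos.ne').1 this.symm

lemma MVC_erase_eq_of_optimal (hloop : ∀ e ∈ Ed, ¬ e.IsDiag) (hy : IsFractionalMatching Ed y)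
    (hval : ∑ e ∈ Ed, y e = MVC V 1 Ed) {e : Sym2 V} (hye : y e = 0) :
    MVC V 1 (Ed.erase e) = MVC V 1 Ed := by
  refine le_antisymm (MVC_mono zero_le_one (erase_subset e Ed)) ?_
  calc MVC V 1 Ed = ∑ e' ∈ Ed.erase e, y e' := by rw [sum_erase _ hye, hval]
    _ ≤ MVC V 1 (Ed.erase e) := (hy.mono (erase_subset e Ed)).sum_le_MVC_one
        fun e' he' => hloop e' (mem_of_mem_erase he')

lemma IsFractionalMatching.pos_of_forall_MVC_erase_ne (hloop : ∀ e ∈ Ed, ¬ e.IsDiag)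
    (hy : IsFractionalMatching Ed y) (hval : ∑ e ∈ Ed, y e = MVC V 1 Ed)
    (hdel : ∀ e ∈ Ed, MVC V 1 (Ed.erase e) ≠ MVC V 1 Ed) : ∀ e ∈ Ed, 0 < y e := fun e he =>
  (hy.nonneg e he).lt_of_ne' fun h0 => hdel e he (MVC_erase_eq_of_optimal hloop hy hval h0)

theorem exists_halfIntegral_optimal (hloop : ∀ e ∈ Ed, ¬ e.IsDiag) :
    ∃ y f, IsFractionalMatching Ed y ∧ (∀ e, ∃ k : ℕ, y e = k / 2) ∧ IsFractionalCover Ed f ∧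
      ∑ e ∈ Ed, y e = MVC V 1 Ed ∧ ∑ v, f v = MVC V 1 Ed := by
  obtain ⟨M, hMR, h1, h2, CL, CR, hcov, hcard⟩ :=
    exists_matching_card_ge_cover ({p | s(p.1, p.2) ∈ Ed} : Finset (V × V))
  have hM : ∀ p ∈ M, s(p.1, p.2) ∈ Ed := fun p hp => (mem_filter.1 (hMR hp)).2
  set f : V → ℝ := fun v => ((if v ∈ CL then 1 else 0) + (if v ∈ CR then 1 else 0)) / 2
  have hy : IsFractionalMatching Ed fun e => edgeCount M e / 2 := by
    refine ⟨fun e _ => by unfold edgeCount; positivity, fun v => ?_⟩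
    rw [weightedDegree, ← sum_div, ← weightedDegree, weightedDegree_edgeCount hM,
      div_le_one two_pos]
    exact_mod_cast card_filter_mem_mk_le_two h1 h2 v
  have hf : IsFractionalCover Ed f := by
    refine ⟨fun v => by positivity, fun u w he => ?_⟩
    have huw := hcov (u, w) (by simpa using he)
    have hwu := hcov (w, u) (by simpa [Sym2.eq_swap] using he)
    simp only [f]
    split_ifs <;> norm_num <;> tauto
  have hfy : ∑ v, f v ≤ ∑ e ∈ Ed, edgeCount M e / 2 := by
    simp only [f, ← sum_div, sum_edgeCount hM, sum_add_distrib, sum_boole, filter_mem_eq_inter,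
      univ_inter]
    gcongr
    exact_mod_cast hcard
  have := hy.sum_le_MVC_one hloop
  have := hf.MVC_le zero_le_one
  exact ⟨_, f, hy, fun e => ⟨_, rfl⟩, hf, by linarith, by linarith⟩

end Duality

section Graph

variable {V : Type*} {G : SimpleGraph V}

theorem SimpleGraph.Connected.mem_of_adj_closed (hconn : G.Connected) {S : Set V}
    (hS : ∀ u w, G.Adj u w → u ∈ S → w ∈ S) {a : V} (ha : a ∈ S) (v : V) : v ∈ S := by
  obtain ⟨p⟩ := hconn a v
  induction p with
  | nil => exact ha
  | cons h _ ih => exact ih (hS _ _ h ha)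

theorem SimpleGraph.Connected.isBipartite_of_add_eq_one (hconn : G.Connected) {f : V → ℝ}
    (htight : ∀ u w, G.Adj u w → f u + f w = 1) {v : V} (hv : f v ≠ 1 / 2) : G.IsBipartite := by
  have hne : ∀ x, f x ≠ 1 / 2 := hconn.mem_of_adj_closed (S := {x | f x ≠ 1 / 2})
    (fun u w huw hu hw => hu (by linarith [htight u w huw, show f w = 1 / 2 from hw])) hv
  refine IsBipartiteWith.isBipartite (s := {x | f x < 1 / 2}) (t := {x | 1 / 2 < f x})
    ⟨Set.disjoint_left.2 fun x (h1 : f x < 1 / 2) (h2 : 1 / 2 < f x) => lt_asymm h1 h2,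
      fun u w huw => ?_⟩
  have := htight u w huw
  rcases (hne u).lt_or_gt with h | h
  · exact Or.inl ⟨h, show 1 / 2 < f w by linarith⟩
  · exact Or.inr ⟨h, show f w < 1 / 2 by linarith⟩

theorem SimpleGraph.Walk.IsCycle.odd_card_or_isBipartite [Fintype V] {u : V}
    {p : G.Walk u u} (hp : p.IsCycle) (hsupp : ∀ x, x ∈ p.support)
    (hadj : ∀ x y, G.Adj x y → p.toSubgraph.Adj x y) :
    Odd (Fintype.card V) ∨ G.IsBipartite := by
  set n := p.length with hn
  have hidx : ∀ x, ∃ i < n, p.getVert i = x := fun x => by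
    obtain ⟨i, hi, hle⟩ := Walk.mem_support_iff_exists_getVert.1 (hsupp x)
    rcases hle.lt_or_eq with hlt | rfl
    · exact ⟨i, hlt, hi⟩
    · exact ⟨0, by have := hp.three_le_length; omega,
        by rw [Walk.getVert_zero, ← hi, Walk.getVert_length]⟩
  choose idx hidx_lt hidx_eq using hidx
  have hinj : ∀ i < n, idx (p.getVert i) = i := fun i hi =>
    hp.getVert_injOn' (by simp only [Set.mem_ofPred_eq]; have := hidx_lt (p.getVert i); omega)
      (by simp only [Set.mem_ofPred_eq]; omega) (hidx_eq _)
  have hcard : Fintype.card V = n := Fintype.card_fin n ▸ Fintype.card_congr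
    { toFun := fun x => ⟨idx x, hidx_lt x⟩, invFun := fun i => p.getVert i,
      left_inv := fun x => hidx_eq x, right_inv := fun i => Fin.ext (hinj i i.2) }
  rcases Nat.even_or_odd n with heven | hodd
  · right
    have hstep : ∀ i < n, idx (p.getVert i) % 2 ≠ idx (p.getVert (i + 1)) % 2 := by
      intro i hi
      rw [hinj i hi]
      rcases (show i + 1 ≤ n by omega).lt_or_eq with h | h
      · rw [hinj _ h]
        omega
      · rw [h, hn, Walk.getVert_length, ← Walk.getVert_zero p, hinj 0 (by omega)]
        obtain ⟨k, hk⟩ := heven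
        omega
    refine IsBipartiteWith.isBipartite (s := {x | idx x % 2 = 0}) (t := {x | idx x % 2 = 1})
      ⟨Set.disjoint_left.2 fun x (h1 : idx x % 2 = 0) (h2 : idx x % 2 = 1) => by omega,
        fun x y hxy => ?_⟩
    obtain ⟨i, hxy', hi⟩ := (Walk.toSubgraph_adj_iff p).1 (hadj x y hxy)
    have := hstep i hi
    simp only [Set.mem_ofPred_eq]
    rcases Sym2.eq_iff.1 hxy' with ⟨rfl, rfl⟩ | ⟨rfl, rfl⟩ <;> omega
  · exact Or.inl (hcard ▸ hodd)

theorem SimpleGraph.Connected.odd_card_or_isBipartite_of_degree_eq_two [Fintype V]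
    [DecidableRel G.Adj] (hconn : G.Connected) (hdeg : ∀ v, G.degree v = 2) :
    Odd (Fintype.card V) ∨ G.IsBipartite := by
  obtain ⟨u⟩ := hconn.nonempty
  have hcyc : G.IsCycles := fun v _ => by
    rw [← coe_neighborFinset, Set.ncard_coe_finset, card_neighborFinset_eq_degree, hdeg]
  obtain ⟨p, hp, hverts⟩ := hcyc.exists_cycle_toSubgraph_verts_eq_connectedComponentSupp
    (c := G.connectedComponentMk u) rfl ((G.degree_pos_iff_exists_adj u).1 (by rw [hdeg]; norm_num))
  have hverts' : ∀ x, x ∈ p.toSubgraph.verts := fun x => by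
    rw [hverts, ConnectedComponent.mem_supp_iff]
    exact ConnectedComponent.eq.2 (hconn x u)
  exact hp.odd_card_or_isBipartite (fun x => p.mem_verts_toSubgraph.1 (hverts' x))
    fun x y hxy => (hp.adj_toSubgraph_iff_of_isCycles hcyc (hverts' x) y).2 hxy

end Graph

section Main

variable {V : Type*} [Fintype V] [DecidableEq V] {G : SimpleGraph V} [DecidableRel G.Adj]

theorem SimpleGraph.IsBipartiteWith.exists_integral_optimal {s t : Set V}
    (hG : G.IsBipartiteWith s t) :
    ∃ y, IsFractionalMatching G.edgeFinset y ∧ (∀ e, ∃ k : ℕ, y e = k) ∧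
      ∑ e ∈ G.edgeFinset, y e = MVC V 1 G.edgeFinset := by
  classical
  obtain ⟨M, hMR, h1, h2, CL, CR, hcov, hcard⟩ :=
    exists_matching_card_ge_cover ({p | G.Adj p.1 p.2 ∧ p.1 ∈ s} : Finset (V × V))
  have hMR' : ∀ p ∈ M, G.Adj p.1 p.2 ∧ p.1 ∈ s := fun p hp => by simpa using hMR hp
  have hM : ∀ p ∈ M, s(p.1, p.2) ∈ G.edgeFinset := fun p hp => by simpa using (hMR' p hp).1
  have hMst : ∀ p ∈ M, p.1 ∈ s ∧ p.2 ∈ t := fun p hp =>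
    ⟨(hMR' p hp).2, hG.mem_of_mem_adj (hMR' p hp).2 (hMR' p hp).1⟩
  have hy : IsFractionalMatching G.edgeFinset (edgeCount M) := by
    refine ⟨fun e _ => by unfold edgeCount; positivity, fun v => ?_⟩
    rw [weightedDegree_edgeCount hM, Nat.cast_le_one]
    exact card_filter_mem_mk_le_one hG.disjoint hMst h1 h2 v
  set f : V → ℝ := fun v => if v ∈ CL ∪ CR then 1 else 0
  have hf : IsFractionalCover G.edgeFinset f := by
    refine ⟨fun v => by positivity, fun u w he => ?_⟩
    have hadj : G.Adj u w := by simpa using he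
    have : u ∈ CL ∪ CR ∨ w ∈ CL ∪ CR := by
      simp only [mem_union]
      rcases hG.mem_of_adj hadj with ⟨hu, -⟩ | ⟨-, hw⟩
      · have := hcov (u, w) (by simp [hadj, hu])
        tauto
      · have := hcov (w, u) (by simp [hadj.symm, hw])
        tauto
    simp only [f]
    split_ifs <;> simp_all
  have hfy : ∑ v, f v ≤ ∑ e ∈ G.edgeFinset, edgeCount M e := by
    simp only [f, sum_boole, sum_edgeCount hM, filter_mem_eq_inter, univ_inter]
    exact_mod_cast (card_union_le _ _).trans hcard
  have := hy.sum_le_MVC_one fun _ => G.not_isDiag_of_mem_edgeFinset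
  have := hf.MVC_le zero_le_one
  exact ⟨_, hy, fun e => ⟨_, rfl⟩, by linarith⟩

theorem SimpleGraph.Connected.exists_adjacent_edge (hconn : G.Connected)
    (hE : 1 < #G.edgeFinset) (e : Sym2 V) : ∃ e' ∈ G.edgeFinset, e' ≠ e ∧ ∃ v ∈ e, v ∈ e' := by
  by_contra! h
  obtain ⟨e', he', hne⟩ := exists_mem_ne hE e
  have hall : ∀ v, v ∈ e := hconn.mem_of_adj_closed (S := {v | v ∈ e})
    (fun u w huw hu => by_contra fun hw => h _ (mem_edgeFinset.2 huw)
      (fun h' => hw (h' ▸ Sym2.mem_mk_right u w)) u hu (Sym2.mem_mk_left u w))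
    (Sym2.out_fst_mem e)
  exact h e' he' hne _ (hall _) (Sym2.out_fst_mem e')

lemma IsFractionalMatching.eq_half_of_half_le (hconn : G.Connected) (hE : 1 < #G.edgeFinset)
    {y : Sym2 V → ℝ} (hy : IsFractionalMatching G.edgeFinset y)
    (hhalf : ∀ e ∈ G.edgeFinset, 1 / 2 ≤ y e) : ∀ e ∈ G.edgeFinset, y e = 1 / 2 := by
  intro e he
  obtain ⟨e', he', hne, v, hv, hv'⟩ := hconn.exists_adjacent_edge hE e
  have := hy.add_le_weightedDegree he he' hne.symm hv hv'
  linarith [hy.weightedDegree_le_one v, hhalf e he, hhalf e' he']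

theorem not_isBipartite_of_forall_MVC_erase_ne (hconn : G.Connected) (hE : 1 < #G.edgeFinset)
    (hdel : ∀ e ∈ G.edgeFinset, MVC V 1 (G.edgeFinset.erase e) ≠ MVC V 1 G.edgeFinset) :
    ¬ G.IsBipartite := by
  intro hbip
  obtain ⟨s, t, hst⟩ := hbip.exists_isBipartiteWith
  obtain ⟨y, hy, hint, hval⟩ := hst.exists_integral_optimal
  have hpos := hy.pos_of_forall_MVC_erase_ne (fun _ => G.not_isDiag_of_mem_edgeFinset) hval hdel
  have hone : ∀ e ∈ G.edgeFinset, 1 ≤ y e := fun e he => by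
    obtain ⟨k, hk⟩ := hint e
    have := hpos e he
    rw [hk] at this ⊢
    exact Nat.one_le_cast.2 (Nat.cast_pos.1 this)
  obtain ⟨e, he⟩ := card_pos.1 (by omega : 0 < #G.edgeFinset)
  have := hy.eq_half_of_half_le hconn hE (fun e he => by linarith [hone e he]) e he
  linarith [hone e he]

theorem isOddCycle_or_exists_MVC_erase_eq (hconn : G.Connected) (hE : 1 < #G.edgeFinset) :
    ((∀ v, G.degree v = 2) ∧ Odd (Fintype.card V) ∧
      MVC V (1 / 2) G.edgeFinset = MVC V 1 G.edgeFinset ∧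
      MVC V 1 G.edgeFinset = #G.edgeFinset / 2) ∨
    ∃ e ∈ G.edgeFinset, MVC V 1 (G.edgeFinset.erase e) = MVC V 1 G.edgeFinset := by
  refine or_iff_not_imp_right.2 fun hdel => ?_
  push Not at hdel
  have hloop : ∀ e ∈ G.edgeFinset, ¬ e.IsDiag := fun _ => G.not_isDiag_of_mem_edgeFinset
  obtain ⟨y, f, hy, hy2, hf, hyval, hfval⟩ := exists_halfIntegral_optimal hloop
  have hpos := hy.pos_of_forall_MVC_erase_ne hloop hyval hdel
  have hy_half : ∀ e ∈ G.edgeFinset, y e = 1 / 2 := hy.eq_half_of_half_le hconn hE fun e he => by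
    obtain ⟨k, hk⟩ := hy2 e
    have := hpos e he
    rw [hk] at this ⊢
    have : (1 : ℝ) ≤ k := Nat.one_le_cast.2 (Nat.cast_pos.1 (show (0 : ℝ) < k by linarith))
    linarith
  have hnbip := not_isBipartite_of_forall_MVC_erase_ne hconn hE hdel
  obtain ⟨htight, hsat⟩ := hy.complementary_slackness hloop hf (hyval.trans hfval.symm)
  have hf_half : ∀ v, f v = 1 / 2 := fun v => by_contra fun hv =>
    hnbip (hconn.isBipartite_of_add_eq_one (fun u w huw =>
      htight u w (mem_edgeFinset.2 huw) (hpos _ (mem_edgeFinset.2 huw))) hv)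
  have hreg : ∀ v, G.degree v = 2 := fun v => by
    have := hsat v (by rw [hf_half]; norm_num)
    rw [weightedDegree, sum_congr rfl fun e he => hy_half e (mem_filter.1 he).1, sum_const,
      ← incidenceFinset_eq_filter, card_incidenceFinset_eq_degree, nsmul_eq_mul] at this
    exact_mod_cast (show (G.degree v : ℝ) = 2 by linarith)
  refine ⟨hreg, (hconn.odd_card_or_isBipartite_of_degree_eq_two hreg).resolve_right hnbip, ?_, ?_⟩
  · refine le_antisymm (MVC_mono_lam (by norm_num) (by norm_num) _) ?_
    rw [← hyval]
    exact hy.sum_le_MVC hloop fun e he => (hy_half e he).le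
  · rw [← hyval, sum_congr rfl hy_half, sum_const, nsmul_eq_mul]
    ring

end Main

/-- For a connected graph `G` with more than one edge,
`max(MVC_{1/2}(G), max_{e∈E} MVC_1(G∖e)) = MVC_1(G)`; moreover either `G` is an odd
cycle, in which case `MVC_{1/2}(G) = MVC_1(G) = |E|/2`, or some edge deletion preserves
the fractional vertex cover number. -/
theorem stmt13 (V : Type*) [Fintype V] [DecidableEq V] (G : SimpleGraph V)
    [DecidableRel G.Adj] (hconn : G.Connected) (hE : 1 < G.edgeFinset.card)
    (hne : G.edgeFinset.Nonempty) :
    max (MVC V (1 / 2) G.edgeFinset)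
        (G.edgeFinset.sup' hne fun e => MVC V 1 (G.edgeFinset.erase e)) =
      MVC V 1 G.edgeFinset ∧
    (((∀ v, G.degree v = 2) ∧ Odd (Fintype.card V) ∧
        MVC V (1 / 2) G.edgeFinset = MVC V 1 G.edgeFinset ∧
        MVC V 1 G.edgeFinset = (G.edgeFinset.card : ℝ) / 2) ∨
      ∃ e ∈ G.edgeFinset, MVC V 1 (G.edgeFinset.erase e) = MVC V 1 G.edgeFinset) := by
  have hcases := isOddCycle_or_exists_MVC_erase_eq hconn hE
  refine ⟨le_antisymm (max_le (MVC_mono_lam (by norm_num) (by norm_num) _)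
    (sup'_le hne _ fun e _ => MVC_mono zero_le_one (erase_subset e _))) ?_, hcases⟩
  rcases hcases with ⟨-, -, hhalf, -⟩ | ⟨e, he, heq⟩
  · exact hhalf ▸ le_max_left _ _
  · exact heq ▸ (le_sup' (fun e => MVC V 1 (G.edgeFinset.erase e)) he).trans (le_max_right _ _)
end

section
/- Let H = (V,E) be a hypergraph where E = E_1 ∪ E_2 with every edge in E_1 containing a common vertex u, and every edge in E_2 disjoint from all other edges (i.e., u is the only vertex in at least two edges). Let q ∈ {1,2}, and let (h_e)_{e∈E} be random variables with |h_e| ≤ 1 such that the collection (h_e)_{e ∈ E_2 ∪ {e'}} is mutually independent for any single e' ∈ E_1, and E[|h_e|^q | (h_{e''})_{e''∈E_2}] = E[|h_e|^q] = p^{w(e)} for each e ∈ E_1. Then, with e' = argmax_{e∈E_1} w(e) and e'' the second largest, E[∏_{e∈E} h_e] ≤ p^{(1−1/q)w(e'') + (1/q)w(e') + (1/q)∑_{e∈E_2} w(e)}. -/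
open Finset MeasureTheory ProbabilityTheory

/-!
Pointwise, `∏ₑ hₑ ≤ |h_{e'}| |h_{e''}| A` with `A = ∏_{e ∈ S2} |hₑ|`: every other factor has
modulus at most `1`. Since each `h_a`, `a ∈ S1`, is independent of the `S2`-family,
`E[|h_a|^r A] = E[|h_a|^r] E[A]` and `E[A] = ∏_{e ∈ S2} E|hₑ|`. For `q = 1` one simply drops
`|h_{e''}| ≤ 1`; for `q = 2`, Cauchy–Schwarz applied to `|h_{e'}| √A` and `|h_{e''}| √A` gives
`E[|h_{e'}| |h_{e''}| A] ≤ (E[h_{e'}²] E[h_{e''}²])^{1/2} E[A]`. Finally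
`E|hₑ| ≤ (E|hₑ|^q)^{1/q} ≤ p^{w(e)/q}` for `e ∈ S2`.
-/

lemma prod_le_abs_mul_abs_mul_prod_abs {ι : Type*} [DecidableEq ι] {s t : Finset ι}
    (hst : Disjoint s t) {i j : ι} (hi : i ∈ s) (hj : j ∈ s) (hij : i ≠ j) {x : ι → ℝ}
    (hx : ∀ k ∈ s, |x k| ≤ 1) :
    ∏ k ∈ s ∪ t, x k ≤ |x i| * |x j| * ∏ k ∈ t, |x k| := by
  have hij_sub : {i, j} ⊆ s := insert_subset hi (singleton_subset_iff.mpr hj)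
  have hrest : ∏ k ∈ s \ {i, j}, |x k| ≤ 1 :=
    prod_le_one (fun _ _ => abs_nonneg _) fun k hk => hx k (mem_sdiff.mp hk).1
  calc ∏ k ∈ s ∪ t, x k ≤ |∏ k ∈ s ∪ t, x k| := le_abs_self _
    _ = (∏ k ∈ s \ {i, j}, |x k|) * (|x i| * |x j|) * ∏ k ∈ t, |x k| := by
        rw [abs_prod, prod_union hst, ← prod_sdiff hij_sub, prod_pair hij]
    _ ≤ |x i| * |x j| * ∏ k ∈ t, |x k| :=
        mul_le_mul_of_nonneg_right (mul_le_of_le_one_left (by positivity) hrest)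
          (prod_nonneg fun _ _ => abs_nonneg _)

section

variable {Ω : Type*} [MeasurableSpace Ω] {μ : Measure Ω}

lemma integral_abs_mul_abs_le_sqrt_mul_sqrt {f g : Ω → ℝ} (hf : MemLp f 2 μ) (hg : MemLp g 2 μ) :
    ∫ ω, |f ω| * |g ω| ∂μ ≤ √(∫ ω, f ω ^ 2 ∂μ) * √(∫ ω, g ω ^ 2 ∂μ) := by
  have := integral_mul_norm_le_Lp_mul_Lq Real.HolderConjugate.two_two
    (by simpa using hf) (by simpa using hg)
  simpa [Real.sqrt_eq_rpow, Real.rpow_two] using this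

lemma integral_abs_le_sqrt_integral_sq [IsProbabilityMeasure μ] {f : Ω → ℝ} (hf : MemLp f 2 μ) :
    ∫ ω, |f ω| ∂μ ≤ √(∫ ω, f ω ^ 2 ∂μ) := by
  simpa using integral_abs_mul_abs_le_sqrt_mul_sqrt hf (memLp_const (1 : ℝ))

lemma integrable_of_abs_le_one [IsFiniteMeasure μ] {f : Ω → ℝ} (hf : Measurable f)
    (hf1 : ∀ ω, |f ω| ≤ 1) : Integrable f μ :=
  .of_bound hf.aestronglyMeasurable 1 (ae_of_all _ hf1)

lemma integral_prod_le_integral_abs_mul_abs_mul_prod_abs [IsFiniteMeasure μ] {ι : Type*}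
    [DecidableEq ι] {s t : Finset ι} (hst : Disjoint s t) {i j : ι} (hi : i ∈ s) (hj : j ∈ s)
    (hij : i ≠ j) {X : ι → Ω → ℝ} (hXm : ∀ k, Measurable (X k)) (hX1 : ∀ k ω, |X k ω| ≤ 1) :
    ∫ ω, ∏ k ∈ s ∪ t, X k ω ∂μ ≤ ∫ ω, |X i ω| * |X j ω| * ∏ k ∈ t, |X k ω| ∂μ := by
  have hprod1 : ∀ (u : Finset ι) ω, ∏ k ∈ u, |X k ω| ≤ 1 := fun u ω =>
    prod_le_one (fun _ _ => abs_nonneg _) fun k _ => hX1 k ω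
  refine integral_mono
    (integrable_of_abs_le_one (by fun_prop) fun ω => by rw [abs_prod]; exact hprod1 _ ω)
    (integrable_of_abs_le_one (by fun_prop) fun ω => ?_)
    fun ω => prod_le_abs_mul_abs_mul_prod_abs hst hi hj hij fun k _ => hX1 k ω
  have hprod0 : 0 ≤ ∏ k ∈ t, |X k ω| := prod_nonneg fun k _ => abs_nonneg (X k ω)
  rw [abs_mul, abs_mul, abs_abs, abs_abs, abs_of_nonneg hprod0]
  exact mul_le_one₀ (mul_le_one₀ (hX1 i ω) (abs_nonneg _) (hX1 j ω)) hprod0 (hprod1 t ω)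

lemma integral_mul_prod_eq_of_iIndepFun {κ : Type*} [DecidableEq κ] {X : κ → Ω → ℝ}
    {a : κ} {s : Finset κ} (ha : a ∉ s) (hX : iIndepFun (fun i : {x // x ∈ insert a s} => X i) μ)
    (hXm : ∀ i, Measurable (X i)) {f g : ℝ → ℝ} (hf : Measurable f) (hg : Measurable g) :
    ∫ ω, f (X a ω) * ∏ i ∈ s, g (X i ω) ∂μ =
      (∫ ω, f (X a ω) ∂μ) * ∏ i ∈ s, ∫ ω, g (X i ω) ∂μ := by
  have hs : ∀ i ∈ s, i ≠ a := fun i hi hia => ha (hia ▸ hi)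
  have hsplit : ∀ F : κ → (ℝ → ℝ) → ℝ,
      ∏ i : {x // x ∈ insert a s}, F i (if i.1 = a then f else g) = F a f * ∏ i ∈ s, F i g :=
    fun F => by
      rw [Finset.prod_coe_sort (insert a s) fun i => F i (if i = a then f else g), prod_insert ha,
        if_pos rfl, prod_congr rfl fun i hi => by rw [if_neg (hs i hi)]]
  calc ∫ ω, f (X a ω) * ∏ i ∈ s, g (X i ω) ∂μ
      = ∫ ω, ∏ i : {x // x ∈ insert a s}, (if i.1 = a then f else g) (X i ω) ∂μ :=
        integral_congr_ae (ae_of_all _ fun ω => (hsplit fun j φ => φ (X j ω)).symm)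
    _ = _ := hX.integral_fun_prod_comp (fun i => (hXm i).aemeasurable)
        (fun i => by split_ifs; exacts [hf.aestronglyMeasurable, hg.aestronglyMeasurable])
    _ = _ := hsplit fun j φ => ∫ ω, φ (X j ω) ∂μ

lemma integral_abs_le_rpow_of_integral_abs_pow_le [IsProbabilityMeasure μ] {q : ℕ}
    (hq : q = 1 ∨ q = 2) {p w : ℝ} (hp : 0 < p) {f : Ω → ℝ} (hf : MemLp f 2 μ)
    (hmom : ∫ ω, |f ω| ^ q ∂μ ≤ p ^ w) : ∫ ω, |f ω| ∂μ ≤ p ^ (1 / (q : ℝ) * w) := by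
  rcases hq with rfl | rfl
  · simpa using hmom
  · calc ∫ ω, |f ω| ∂μ ≤ √(∫ ω, f ω ^ 2 ∂μ) := integral_abs_le_sqrt_integral_sq hf
      _ ≤ √(p ^ w) := Real.sqrt_le_sqrt (by simpa using hmom)
      _ = p ^ (1 / ((2 : ℕ) : ℝ) * w) := by
        rw [Real.sqrt_eq_rpow, ← Real.rpow_mul hp.le]; norm_num [mul_comm]

lemma prod_integral_abs_le_rpow_sum [IsProbabilityMeasure μ] {q : ℕ} (hq : q = 1 ∨ q = 2)
    {p : ℝ} (hp : 0 < p) {κ : Type*} {s : Finset κ} {X : κ → Ω → ℝ} {w : κ → ℝ}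
    (hX : ∀ i ∈ s, MemLp (X i) 2 μ) (hmom : ∀ i ∈ s, ∫ ω, |X i ω| ^ q ∂μ ≤ p ^ w i) :
    ∏ i ∈ s, ∫ ω, |X i ω| ∂μ ≤ p ^ (1 / (q : ℝ) * ∑ i ∈ s, w i) := by
  calc ∏ i ∈ s, ∫ ω, |X i ω| ∂μ ≤ ∏ i ∈ s, p ^ (1 / (q : ℝ) * w i) :=
        prod_le_prod (fun i _ => integral_nonneg fun ω => abs_nonneg _)
          fun i hi => integral_abs_le_rpow_of_integral_abs_pow_le hq hp (hX i hi) (hmom i hi)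
    _ = p ^ (1 / (q : ℝ) * ∑ i ∈ s, w i) := by rw [mul_sum, Real.rpow_sum_of_pos hp]

lemma integral_abs_mul_abs_mul_le_sqrt_mul_sqrt [IsFiniteMeasure μ] {X Y A : Ω → ℝ}
    (hX : Measurable X) (hY : Measurable Y) (hA : Measurable A) (hX1 : ∀ ω, |X ω| ≤ 1)
    (hY1 : ∀ ω, |Y ω| ≤ 1) (hA0 : ∀ ω, 0 ≤ A ω) (hA1 : ∀ ω, A ω ≤ 1) :
    ∫ ω, |X ω| * |Y ω| * A ω ∂μ ≤ √(∫ ω, X ω ^ 2 * A ω ∂μ) * √(∫ ω, Y ω ^ 2 * A ω ∂μ) := by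
  have hmemLp : ∀ Z : Ω → ℝ, Measurable Z → (∀ ω, |Z ω| ≤ 1) →
      MemLp (fun ω => Z ω * √(A ω)) 2 μ := fun Z hZ hZ1 =>
    .of_bound (by fun_prop) 1 (ae_of_all _ fun ω => by
      rw [Real.norm_eq_abs, abs_mul, abs_of_nonneg (Real.sqrt_nonneg _)]
      exact mul_le_one₀ (hZ1 ω) (Real.sqrt_nonneg _) (Real.sqrt_le_one.mpr (hA1 ω)))
  have hcs := integral_abs_mul_abs_le_sqrt_mul_sqrt (hmemLp X hX hX1) (hmemLp Y hY hY1)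
  have hsq : ∀ Z : Ω → ℝ, ∀ ω, (Z ω * √(A ω)) ^ 2 = Z ω ^ 2 * A ω := fun Z ω => by
    rw [mul_pow, Real.sq_sqrt (hA0 ω)]
  have habs : ∀ ω, |X ω * √(A ω)| * |Y ω * √(A ω)| = |X ω| * |Y ω| * A ω := fun ω => by
    rw [abs_mul, abs_mul, abs_of_nonneg (Real.sqrt_nonneg _)]
    linear_combination |X ω| * |Y ω| * Real.mul_self_sqrt (hA0 ω)
  simpa only [hsq, habs] using hcs

lemma integral_abs_mul_abs_mul_le_rpow [IsFiniteMeasure μ] {q : ℕ} (hq : q = 1 ∨ q = 2)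
    {p wX wY : ℝ} (hp : 0 < p) {X Y A : Ω → ℝ} (hX : Measurable X) (hY : Measurable Y)
    (hA : Measurable A) (hX1 : ∀ ω, |X ω| ≤ 1) (hY1 : ∀ ω, |Y ω| ≤ 1) (hA0 : ∀ ω, 0 ≤ A ω)
    (hA1 : ∀ ω, A ω ≤ 1)
    (hXA : ∫ ω, |X ω| ^ q * A ω ∂μ = (∫ ω, |X ω| ^ q ∂μ) * ∫ ω, A ω ∂μ)
    (hYA : ∫ ω, |Y ω| ^ q * A ω ∂μ = (∫ ω, |Y ω| ^ q ∂μ) * ∫ ω, A ω ∂μ)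
    (hXmom : ∫ ω, |X ω| ^ q ∂μ ≤ p ^ wX) (hYmom : ∫ ω, |Y ω| ^ q ∂μ ≤ p ^ wY) :
    ∫ ω, |X ω| * |Y ω| * A ω ∂μ ≤
      p ^ ((1 - 1 / (q : ℝ)) * wY + 1 / (q : ℝ) * wX) * ∫ ω, A ω ∂μ := by
  have hAint : 0 ≤ ∫ ω, A ω ∂μ := integral_nonneg hA0
  rcases hq with rfl | rfl
  · simp only [pow_one] at hXA hXmom
    have hint : Integrable (fun ω => |X ω| * A ω) μ :=
      integrable_of_abs_le_one (by fun_prop) fun ω => by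
        rw [abs_mul, abs_abs, abs_of_nonneg (hA0 ω)]
        exact mul_le_one₀ (hX1 ω) (hA0 ω) (hA1 ω)
    calc ∫ ω, |X ω| * |Y ω| * A ω ∂μ ≤ ∫ ω, |X ω| * A ω ∂μ :=
          integral_mono_of_nonneg (ae_of_all _ fun ω => by have := hA0 ω; positivity) hint
            (ae_of_all _ fun ω => mul_le_mul_of_nonneg_right
                (mul_le_of_le_one_right (abs_nonneg _) (hY1 ω)) (hA0 ω))
      _ ≤ p ^ wX * ∫ ω, A ω ∂μ := by rw [hXA]; gcongr
      _ = _ := by norm_num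
  · simp only [sq_abs] at hXA hYA hXmom hYmom
    calc ∫ ω, |X ω| * |Y ω| * A ω ∂μ
        ≤ √(∫ ω, X ω ^ 2 * A ω ∂μ) * √(∫ ω, Y ω ^ 2 * A ω ∂μ) :=
          integral_abs_mul_abs_mul_le_sqrt_mul_sqrt hX hY hA hX1 hY1 hA0 hA1
      _ = √(∫ ω, X ω ^ 2 ∂μ) * √(∫ ω, Y ω ^ 2 ∂μ) * ∫ ω, A ω ∂μ := by
          rw [hXA, hYA, Real.sqrt_mul' _ hAint, Real.sqrt_mul' _ hAint]
          linear_combination √(∫ ω, X ω ^ 2 ∂μ) * √(∫ ω, Y ω ^ 2 ∂μ) * Real.mul_self_sqrt hAint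
      _ ≤ √(p ^ wX) * √(p ^ wY) * ∫ ω, A ω ∂μ := by gcongr
      _ = _ := by
          rw [Real.sqrt_eq_rpow, Real.sqrt_eq_rpow, ← Real.rpow_mul hp.le, ← Real.rpow_mul hp.le,
            ← Real.rpow_add hp]
          congr 2
          push_cast
          ring

end

theorem stmt15_general {ι : Type*} [Fintype ι] [DecidableEq ι]
    (S1 S2 : Finset ι) (hdisj : Disjoint S1 S2) (hcover : S1 ∪ S2 = Finset.univ)
    (q : ℕ) (hq : q = 1 ∨ q = 2) (p : ℝ) (hp0 : 0 < p)
    (w : ι → ℝ)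
    {Ω : Type*} [MeasurableSpace Ω] (μ : Measure Ω) [IsProbabilityMeasure μ]
    (h : ι → Ω → ℝ) (hmeas : ∀ e, Measurable (h e))
    (hbd : ∀ e ω, |h e ω| ≤ 1)
    (hindep : ∀ e' ∈ S1,
      iIndepFun (m := fun _ : {x // x ∈ insert e' S2} => (inferInstance : MeasurableSpace ℝ))
        (fun e : {x // x ∈ insert e' S2} => h e.1) μ)
    (hmom1 : ∀ e ∈ S1, ∫ ω, |h e ω| ^ q ∂μ = p ^ (w e))
    (hmom2 : ∀ e ∈ S2, ∫ ω, |h e ω| ^ q ∂μ ≤ p ^ (w e))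
    (e' e'' : ι) (he' : e' ∈ S1) (he'' : e'' ∈ S1) (hne : e' ≠ e'') :
    ∫ ω, ∏ e, h e ω ∂μ ≤
      p ^ ((1 - 1 / (q : ℝ)) * w e'' + (1 / (q : ℝ)) * w e' +
        (1 / (q : ℝ)) * ∑ e ∈ S2, w e) := by
  set A : Ω → ℝ := fun ω => ∏ e ∈ S2, |h e ω|
  have hA0 : ∀ ω, 0 ≤ A ω := fun ω => prod_nonneg fun e _ => abs_nonneg _
  have hA1 : ∀ ω, A ω ≤ 1 := fun ω => prod_le_one (fun e _ => abs_nonneg _) fun e _ => hbd e ω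
  have hnotS2 : ∀ e ∈ S1, e ∉ S2 := fun e he => disjoint_left.mp hdisj he
  have hA : ∫ ω, A ω ∂μ = ∏ e ∈ S2, ∫ ω, |h e ω| ∂μ := by
    simpa using integral_mul_prod_eq_of_iIndepFun (hnotS2 e' he') (hindep e' he') hmeas
      (measurable_const (a := (1 : ℝ))) measurable_abs
  have hfactor : ∀ e ∈ S1, ∫ ω, |h e ω| ^ q * A ω ∂μ = (∫ ω, |h e ω| ^ q ∂μ) * ∫ ω, A ω ∂μ :=
    fun e he => hA ▸ integral_mul_prod_eq_of_iIndepFun (hnotS2 e he) (hindep e he) hmeas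
      (measurable_abs.pow_const q) measurable_abs
  calc ∫ ω, ∏ e, h e ω ∂μ ≤ ∫ ω, |h e' ω| * |h e'' ω| * A ω ∂μ := by
        simpa only [← hcover] using
          integral_prod_le_integral_abs_mul_abs_mul_prod_abs hdisj he' he'' hne hmeas hbd
    _ ≤ p ^ ((1 - 1 / (q : ℝ)) * w e'' + 1 / (q : ℝ) * w e') * ∫ ω, A ω ∂μ :=
        integral_abs_mul_abs_mul_le_rpow hq hp0 (hmeas e') (hmeas e'') (by fun_prop) (hbd e')
          (hbd e'') hA0 hA1 (hfactor e' he') (hfactor e'' he'') (hmom1 e' he').le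
          (hmom1 e'' he'').le
    _ ≤ p ^ ((1 - 1 / (q : ℝ)) * w e'' + 1 / (q : ℝ) * w e') *
          p ^ (1 / (q : ℝ) * ∑ e ∈ S2, w e) := by
        rw [hA]
        gcongr
        exact prod_integral_abs_le_rpow_sum hq hp0
          (fun e _ => .of_bound (hmeas e).aestronglyMeasurable 1 (ae_of_all _ (hbd e))) hmom2
    _ = _ := (Real.rpow_add hp0 _ _).symm

/-- Base case of the weights lemma: edges split into `S1` (all through a common vertex)
and `S2` (pairwise disjoint from everything else).  With the stated independence and
moment conditions, `E[∏_e h_e] ≤ p^{(1−1/q)w(e'') + (1/q)w(e') + (1/q)∑_{e∈S2} w(e)}`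
where `e'` maximizes `w` over `S1` and `e''` is the second largest. -/
theorem stmt15 {ι : Type*} [Fintype ι] [DecidableEq ι]
    (S1 S2 : Finset ι) (hdisj : Disjoint S1 S2) (hcover : S1 ∪ S2 = Finset.univ)
    (q : ℕ) (hq : q = 1 ∨ q = 2) (p : ℝ) (hp0 : 0 < p) (hp1 : p < 1)
    (w : ι → ℝ) (hw : ∀ e, 0 ≤ w e)
    {Ω : Type*} [MeasurableSpace Ω] (μ : Measure Ω) [IsProbabilityMeasure μ]
    (h : ι → Ω → ℝ) (hmeas : ∀ e, Measurable (h e))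
    (hbd : ∀ e ω, |h e ω| ≤ 1)
    (hindep : ∀ e' ∈ S1,
      iIndepFun (m := fun _ : {x // x ∈ insert e' S2} => (inferInstance : MeasurableSpace ℝ))
        (fun e : {x // x ∈ insert e' S2} => h e.1) μ)
    (hmom1 : ∀ e ∈ S1, ∫ ω, |h e ω| ^ q ∂μ = p ^ (w e))
    (hmom2 : ∀ e ∈ S2, ∫ ω, |h e ω| ^ q ∂μ ≤ p ^ (w e))
    (e' e'' : ι) (he' : e' ∈ S1) (he'' : e'' ∈ S1) (hne : e' ≠ e'')
    (hmax : ∀ e ∈ S1, w e ≤ w e')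
    (hsecond : ∀ e ∈ S1, e ≠ e' → w e ≤ w e'') (hle : w e'' ≤ w e') :
    ∫ ω, ∏ e, h e ω ∂μ ≤
      p ^ ((1 - 1 / (q : ℝ)) * w e'' + (1 / (q : ℝ)) * w e' +
        (1 / (q : ℝ)) * ∑ e ∈ S2, w e) :=
  stmt15_general S1 S2 hdisj hcover q hq p hp0 w μ h hmeas hbd hindep hmom1 hmom2 e' e'' he' he''
    hne
end

section
/- Let n, T, c ∈ ℕ with T ≤ n/10 and c ≥ 1, and suppose β : {0,…,n} → [0,∞) satisfies ∑_{k=0}^n C(n,k)·β_k ≤ A·2^c for some A ≥ 1. Then ∑_{k=c+1}^{T} C(T,k)·β_k^μ ≤ A·(2eT/n)^c for any μ ≥ 1, provided β_k ≤ 1 for all k. In particular this is at most A·2^{−c}. -/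
open Finset

/-
Since `C(T,k) / C(n,k) ≤ (T/n)^k` for `T ≤ n`, and `β_k^μ ≤ β_k`, every term with `k > c` is at
most `(T/n)^(c+1)` times the corresponding term of `∑ C(n,k) β_k ≤ A 2^c`. Hence the sum is at
most `(T/n)^(c+1) A 2^c ≤ A (2T/n)^c`, and `2T/n ≤ 1/2` when `T ≤ n/10`.
-/

namespace Nat

theorem descFactorial_mul_pow_le_descFactorial_mul_pow {m n : ℕ} (h : m ≤ n) (k : ℕ) :
    m.descFactorial k * n ^ k ≤ n.descFactorial k * m ^ k := by
  induction k with
  | zero => simp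
  | succ k ih =>
    have hstep : (m - k) * n ≤ (n - k) * m := by
      rw [Nat.sub_mul, Nat.sub_mul, Nat.mul_comm n m]
      exact Nat.sub_le_sub_left (Nat.mul_le_mul_left k h) _
    calc m.descFactorial (k + 1) * n ^ (k + 1)
        = ((m - k) * n) * (m.descFactorial k * n ^ k) := by rw [descFactorial_succ]; ring
      _ ≤ ((n - k) * m) * (n.descFactorial k * m ^ k) := Nat.mul_le_mul hstep ih
      _ = n.descFactorial (k + 1) * m ^ (k + 1) := by rw [descFactorial_succ]; ring

theorem choose_mul_pow_le_choose_mul_pow {m n : ℕ} (h : m ≤ n) (k : ℕ) :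
    m.choose k * n ^ k ≤ n.choose k * m ^ k := by
  have := descFactorial_mul_pow_le_descFactorial_mul_pow h k
  rw [descFactorial_eq_factorial_mul_choose, descFactorial_eq_factorial_mul_choose,
    Nat.mul_assoc, Nat.mul_assoc] at this
  exact Nat.le_of_mul_le_mul_left this k.factorial_pos

theorem cast_choose_le_choose_mul_div_pow {m n : ℕ} (h : m ≤ n) (k : ℕ) :
    (m.choose k : ℝ) ≤ n.choose k * ((m : ℝ) / n) ^ k := by
  rcases n.eq_zero_or_pos with rfl | hn
  · obtain rfl : m = 0 := Nat.le_zero.mp h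
    cases k <;> simp
  rw [div_pow, ← mul_div_assoc, le_div_iff₀ (by positivity)]
  exact_mod_cast choose_mul_pow_le_choose_mul_pow h k

end Nat

theorem sum_Icc_choose_mul_le {m n : ℕ} (h : m ≤ n) (c : ℕ) {β : ℕ → ℝ} (hβ : ∀ k, 0 ≤ β k) :
    ∑ k ∈ Icc c m, (m.choose k : ℝ) * β k ≤
      ((m : ℝ) / n) ^ c * ∑ k ∈ range (n + 1), (n.choose k : ℝ) * β k := by
  have hratio : (m : ℝ) / n ≤ 1 := div_le_one_of_le₀ (by exact_mod_cast h) n.cast_nonneg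
  calc ∑ k ∈ Icc c m, (m.choose k : ℝ) * β k
      ≤ ∑ k ∈ Icc c m, ((m : ℝ) / n) ^ c * ((n.choose k : ℝ) * β k) := by
        refine sum_le_sum fun k hk => ?_
        calc (m.choose k : ℝ) * β k
            ≤ n.choose k * ((m : ℝ) / n) ^ k * β k :=
              mul_le_mul_of_nonneg_right (Nat.cast_choose_le_choose_mul_div_pow h k) (hβ k)
          _ ≤ n.choose k * ((m : ℝ) / n) ^ c * β k := by
              have := pow_le_pow_of_le_one (by positivity) hratio (mem_Icc.mp hk).1
              gcongr
              exact hβ k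
          _ = ((m : ℝ) / n) ^ c * ((n.choose k : ℝ) * β k) := by ring
    _ = ((m : ℝ) / n) ^ c * ∑ k ∈ Icc c m, (n.choose k : ℝ) * β k := (mul_sum ..).symm
    _ ≤ ((m : ℝ) / n) ^ c * ∑ k ∈ range (n + 1), (n.choose k : ℝ) * β k := by
        refine mul_le_mul_of_nonneg_left (sum_le_sum_of_subset_of_nonneg (fun k hk => ?_)
          fun k _ _ => mul_nonneg (Nat.cast_nonneg _) (hβ k)) (by positivity)
        simp only [mem_Icc, mem_range] at hk ⊢
        omega

theorem stmt17_general (n T c : ℕ) (hT : 10 * T ≤ n)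
    (A μ : ℝ) (hμ : 1 ≤ μ)
    (β : ℕ → ℝ) (hβ0 : ∀ k, 0 ≤ β k) (hβ1 : ∀ k, β k ≤ 1)
    (hsum : ∑ k ∈ range (n + 1), (n.choose k : ℝ) * β k ≤ A * 2 ^ c) :
    (∑ k ∈ Icc (c + 1) T, (T.choose k : ℝ) * β k ^ μ ≤
        A * (2 * Real.exp 1 * T / n) ^ c) ∧
      ∑ k ∈ Icc (c + 1) T, (T.choose k : ℝ) * β k ^ μ ≤ A * 2 ^ (-(c : ℤ)) := by
  have hTn : T ≤ n := by omega
  have hsum0 : 0 ≤ ∑ k ∈ range (n + 1), (n.choose k : ℝ) * β k :=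
    sum_nonneg fun k _ => mul_nonneg (Nat.cast_nonneg _) (hβ0 k)
  have hA0 : 0 ≤ A := nonneg_of_mul_nonneg_left (hsum0.trans hsum) (by positivity)
  have hratio : (T : ℝ) / n ≤ 1 := div_le_one_of_le₀ (by exact_mod_cast hTn) n.cast_nonneg
  have hmain : ∑ k ∈ Icc (c + 1) T, (T.choose k : ℝ) * β k ^ μ ≤ A * (2 * T / n) ^ c :=
    calc ∑ k ∈ Icc (c + 1) T, (T.choose k : ℝ) * β k ^ μ
        ≤ ∑ k ∈ Icc (c + 1) T, (T.choose k : ℝ) * β k := by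
          gcongr with k
          exact Real.rpow_le_self_of_le_one (hβ0 k) (hβ1 k) hμ
      _ ≤ ((T : ℝ) / n) ^ (c + 1) * ∑ k ∈ range (n + 1), (n.choose k : ℝ) * β k :=
          sum_Icc_choose_mul_le hTn (c + 1) hβ0
      _ ≤ ((T : ℝ) / n) ^ c * (A * 2 ^ c) :=
          mul_le_mul (pow_le_pow_of_le_one (by positivity) hratio c.le_succ) hsum hsum0
            (by positivity)
      _ = A * (2 * T / n) ^ c := by rw [mul_div_assoc, mul_pow]; ring
  refine ⟨hmain.trans ?_, hmain.trans ?_⟩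
  · gcongr
    exact le_mul_of_one_le_right zero_le_two (Real.one_le_exp zero_le_one)
  · rw [zpow_neg, zpow_natCast, ← inv_pow]
    gcongr
    have h4T : (4 * T : ℝ) ≤ n := by exact_mod_cast (by omega : 4 * T ≤ n)
    exact div_le_of_le_mul₀ n.cast_nonneg (by norm_num) (by linarith)

/-- The high-weight terms estimate: if `T ≤ n/10`, `c ≥ 1`, `0 ≤ β_k ≤ 1`, `μ ≥ 1`, and
`∑_{k=0}^n C(n,k) β_k ≤ A·2^c` with `A ≥ 1`, then
`∑_{k=c+1}^T C(T,k) β_k^μ ≤ A (2eT/n)^c`, and in particular it is at most `A·2^{−c}`. -/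
theorem stmt17 (n T c : ℕ) (hT : 10 * T ≤ n) (hc : 1 ≤ c)
    (A μ : ℝ) (hA : 1 ≤ A) (hμ : 1 ≤ μ)
    (β : ℕ → ℝ) (hβ0 : ∀ k, 0 ≤ β k) (hβ1 : ∀ k, β k ≤ 1)
    (hsum : ∑ k ∈ range (n + 1), (n.choose k : ℝ) * β k ≤ A * 2 ^ c) :
    (∑ k ∈ Icc (c + 1) T, (T.choose k : ℝ) * β k ^ μ ≤
        A * (2 * Real.exp 1 * T / n) ^ c) ∧
      ∑ k ∈ Icc (c + 1) T, (T.choose k : ℝ) * β k ^ μ ≤ A * 2 ^ (-(c : ℤ)) :=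
  stmt17_general n T c hT A μ hμ β hβ0 hβ1 hsum
end
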